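/- Let G be a 3-edge-colorable 3-regular graph and C a cut of G with |C| = 2 or |C| = 4. Then the subgraph of G induced by either shore of C is matchable (has a perfect matching). -/

import Mathlib

/-- The underlying simple graph of a multigraph given by `ends`. -/
def toSimple {V E : Type} (ends : E → Sym2 V) : SimpleGraph V where
  Adj u w := u ≠ w ∧ ∃ e, ends e = s(u, w)
  symm := by
    constructor
    rintro u w ⟨hne, e, he⟩
    exact ⟨hne.symm, e, by rw [he]; exact Sym2.eq_swap⟩
  loopless := by constructor; rintro u ⟨hne, -⟩; exact hne rfl

/-- The edge cut `∂(X)`. -/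
def Cut {V E : Type} (ends : E → Sym2 V) (X : Set V) : Set E :=
  {e | ∃ u ∈ X, ∃ w, w ∉ X ∧ ends e = s(u, w)}

/-- Degree of a vertex (counting multiplicities). -/
noncomputable def deg {V E : Type} (ends : E → Sym2 V) (v : V) : ℕ :=
  {e | v ∈ ends e}.ncard

/-- `G` is 3-connected: connected, and removing any set of at most two vertices
(that does not remove everything) leaves it connected. -/
def ThreeConnected {V E : Type} (ends : E → Sym2 V) : Prop :=
  (toSimple ends).Connected ∧
    ∀ S : Set V, S.ncard ≤ 2 → Sᶜ.Nonempty → ((toSimple ends).induce Sᶜ).Connected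

/-- A proper edge coloring: edges sharing a vertex get different colors. -/
def Proper {V E : Type} (ends : E → Sym2 V) {r : ℕ} (c : E → Fin r) : Prop :=
  ∀ e f, e ≠ f → (∃ v, v ∈ ends e ∧ v ∈ ends f) → c e ≠ c f

/-- The subgraph induced by `X` is matchable: some set of edges with both ends
in `X` covers every vertex of `X` exactly once. -/
def InducedMatchable {V E : Type} (ends : E → Sym2 V) (X : Set V) : Prop :=
  ∃ M : Set E, (∀ e ∈ M, ∀ w ∈ ends e, w ∈ X) ∧ ∀ v ∈ X, ∃! e, e ∈ M ∧ v ∈ ends e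

/-!
Each colour class of a proper 3-edge-colouring of a cubic graph is a perfect matching `Mᵢ`,
and `|Mᵢ ∩ ∂X| ≡ |X| (mod 2)` by counting the vertices of `X` through their matching edges.
So the three numbers `|Mᵢ ∩ ∂X|` have the same parity and sum to `|∂X| ∈ {2, 4}`; they cannot
all be odd, hence they are even and one of them is `0`. That colour class avoids `∂X`, so it
splits into perfect matchings of both shores.
-/

open scoped Finset

lemma Set.ncard_eq_sum_ncard_preimage_inter {α β : Type*} [Finite α] [Fintype β] (f : α → β)
    (s : Set α) : s.ncard = ∑ b, (f ⁻¹' {b} ∩ s).ncard := by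
  classical
  have := Fintype.ofFinite α
  rw [Set.ncard_eq_toFinset_card', Finset.card_eq_sum_card_fiberwise (f := f) (t := Finset.univ)
    fun _ _ ↦ Finset.mem_univ _]
  refine Finset.sum_congr rfl fun b _ ↦ ?_
  rw [← Set.ncard_coe_finset]
  congr 1
  ext
  simp [and_comm]

variable {V E : Type} {ends : E → Sym2 V}

lemma cut_compl (ends : E → Sym2 V) (X : Set V) : Cut ends Xᶜ = Cut ends X := by
  ext e
  constructor <;> rintro ⟨u, hu, w, hw, h⟩
  · exact ⟨w, not_not.mp hw, u, hu, h.trans Sym2.eq_swap⟩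
  · exact ⟨w, hw, u, not_not.mpr hu, h.trans Sym2.eq_swap⟩

lemma mem_cut_iff {X : Set V} {e : E} {u w : V} (h : ends e = s(u, w)) :
    e ∈ Cut ends X ↔ (u ∈ X ↔ w ∉ X) := by
  constructor
  · rintro ⟨a, ha, b, hb, hab⟩
    rw [h, Sym2.eq_iff] at hab
    rcases hab with ⟨rfl, rfl⟩ | ⟨rfl, rfl⟩ <;> tauto
  · intro huw
    by_cases hu : u ∈ X
    · exact ⟨u, hu, w, huw.mp hu, h⟩
    · exact ⟨w, not_not.mp (mt huw.mpr hu), u, hu, h.trans Sym2.eq_swap⟩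

lemma mem_cut_of_mem_ends {X : Set V} {e : E} {u w : V} (hu : u ∈ ends e) (hw : w ∈ ends e)
    (huX : u ∈ X) (hwX : w ∉ X) : e ∈ Cut ends X :=
  ⟨u, huX, w, hwX, (Sym2.mem_and_mem_iff (by rintro rfl; exact hwX huX)).mp ⟨hu, hw⟩⟩

lemma card_filter_mem_sym2 [DecidableEq V] (s : Finset V) {u w : V} (huw : u ≠ w) :
    #{v ∈ s | v ∈ s(u, w)} = (if u ∈ s then 1 else 0) + (if w ∈ s then 1 else 0) := by
  simp only [Sym2.mem_iff, Finset.filter_or, Finset.filter_eq']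
  rw [Finset.card_union_of_disjoint (by split_ifs <;> simp [huw])]
  split_ifs <;> rfl

open scoped Classical in
lemma card_filter_mem_ends_eq_ite_mem_cut [DecidableEq V] {e : E} (he : ¬ (ends e).IsDiag)
    (X : Finset V) :
    ((#{v ∈ X | v ∈ ends e} : ℕ) : ZMod 2) = if e ∈ Cut ends X then 1 else 0 := by
  obtain ⟨u, w, hw⟩ : ∃ u w, ends e = s(u, w) := Sym2.exists.mp ⟨_, rfl⟩
  have huw : u ≠ w := by simpa [hw] using he
  rw [hw, card_filter_mem_sym2 X huw, if_congr (mem_cut_iff hw) rfl rfl]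
  by_cases hu : u ∈ X <;> by_cases hw : w ∈ X <;> simp [hu, hw]
  decide

def IsPerfectMatching (ends : E → Sym2 V) (M : Set E) : Prop :=
  ∀ v, ∃! e, e ∈ M ∧ v ∈ ends e

namespace IsPerfectMatching

variable {M : Set E}

open scoped Classical in
lemma card_filter_mem_ends [Fintype E] (hM : IsPerfectMatching ends M) (v : V) :
    #{e ∈ M.toFinset | v ∈ ends e} = 1 := by
  obtain ⟨e, he, huniq⟩ := hM v
  refine Finset.card_eq_one.mpr ⟨e, ?_⟩
  ext f
  simp only [Finset.mem_filter, Set.mem_toFinset, Finset.mem_singleton]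
  exact ⟨huniq f, by rintro rfl; exact he⟩

open scoped Classical in
theorem ncard_inter_cut [Fintype V] [Fintype E] (hM : IsPerfectMatching ends M)
    (hloop : ∀ e, ¬ (ends e).IsDiag) (X : Set V) :
    ((M ∩ Cut ends X).ncard : ZMod 2) = X.ncard := by
  symm
  calc (X.ncard : ZMod 2)
      = ∑ v ∈ X.toFinset, (1 : ZMod 2) := by simp [Set.ncard_eq_toFinset_card']
    _ = ∑ v ∈ X.toFinset, ∑ e ∈ M.toFinset, if v ∈ ends e then 1 else 0 := by
        refine Finset.sum_congr rfl fun v _ ↦ ?_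
        rw [Finset.sum_boole, hM.card_filter_mem_ends, Nat.cast_one]
    _ = ∑ e ∈ M.toFinset, ∑ v ∈ X.toFinset, if v ∈ ends e then 1 else 0 := Finset.sum_comm
    _ = ∑ e ∈ M.toFinset, if e ∈ Cut ends X then 1 else 0 := by
        refine Finset.sum_congr rfl fun e _ ↦ ?_
        simpa [Finset.sum_boole] using card_filter_mem_ends_eq_ite_mem_cut (hloop e) X.toFinset
    _ = ((M ∩ Cut ends X).ncard : ZMod 2) := by
        rw [Finset.sum_boole, ← Set.ncard_coe_finset]
        congr 2
        ext
        simp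

lemma inducedMatchable_of_disjoint_cut (hM : IsPerfectMatching ends M) {X : Set V}
    (hX : Disjoint M (Cut ends X)) : InducedMatchable ends X := by
  refine ⟨{e ∈ M | ∀ w ∈ ends e, w ∈ X}, fun e he ↦ he.2, fun v hv ↦ ?_⟩
  obtain ⟨e, ⟨heM, hve⟩, huniq⟩ := hM v
  have hinside : ∀ w ∈ ends e, w ∈ X := fun w hw ↦ by
    by_contra hwX
    exact hX.notMem_of_mem_left heM (mem_cut_of_mem_ends hve hw hv hwX)
  exact ⟨e, ⟨⟨heM, hinside⟩, hve⟩, fun f hf ↦ huniq f ⟨hf.1.1, hf.2⟩⟩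

end IsPerfectMatching

theorem Proper.isPerfectMatching_preimage {r : ℕ} {c : E → Fin r} (hc : Proper ends c)
    (hreg : ∀ v, deg ends v = r) (i : Fin r) : IsPerfectMatching ends (c ⁻¹' {i}) := by
  intro v
  set S := {e | v ∈ ends e}
  have hS : S.ncard = r := hreg v
  have hinj : S.InjOn c := fun e he f hf hef ↦ by
    by_contra hne
    exact hc e f hne ⟨v, he, hf⟩ hef
  have himage : c '' S = Set.univ :=
    Set.eq_of_subset_of_ncard_le (Set.subset_univ _)
      (by rw [hinj.ncard_image, hS, Set.ncard_univ, Nat.card_eq_fintype_card, Fintype.card_fin])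
  obtain ⟨e, he, hei⟩ := himage ▸ Set.mem_univ i
  exact ⟨e, ⟨hei, he⟩, fun f hf ↦ hinj hf.2 he (hf.1.trans hei.symm)⟩

/-- In a 3-edge-colorable 3-regular loopless multigraph, if `C = ∂(X)` is a cut
with `|C| = 2` or `|C| = 4`, then the subgraph induced by either shore of `C`
has a perfect matching. -/
theorem stmt19 {V E : Type} [Fintype V] [Fintype E]
    (ends : E → Sym2 V) (hloop : ∀ e, ¬ (ends e).IsDiag)
    (hreg : ∀ v, deg ends v = 3)
    (hcol : ∃ c : E → Fin 3, Proper ends c)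
    (X : Set V) (hC : (Cut ends X).ncard = 2 ∨ (Cut ends X).ncard = 4) :
    InducedMatchable ends X ∧ InducedMatchable ends Xᶜ := by
  obtain ⟨c, hc⟩ := hcol
  have hmatch := hc.isPerfectMatching_preimage hreg
  set n : Fin 3 → ℕ := fun i ↦ (c ⁻¹' {i} ∩ Cut ends X).ncard
  have hparity : ∀ i, n i % 2 = X.ncard % 2 := fun i ↦
    (ZMod.natCast_eq_natCast_iff' _ _ 2).mp ((hmatch i).ncard_inter_cut hloop X)
  have hsum : (Cut ends X).ncard = n 0 + n 1 + n 2 := by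
    rw [Set.ncard_eq_sum_ncard_preimage_inter c, Fin.sum_univ_three]
  obtain ⟨i, hi⟩ : ∃ i, n i = 0 := by
    by_contra! hne
    have := hparity 0; have := hparity 1; have := hparity 2
    have := hne 0; have := hne 1; have := hne 2
    omega
  have hdisj : Disjoint (c ⁻¹' {i}) (Cut ends X) :=
    Set.disjoint_iff_inter_eq_empty.mpr ((Set.ncard_eq_zero).mp hi)
  exact ⟨(hmatch i).inducedMatchable_of_disjoint_cut hdisj,
    (hmatch i).inducedMatchable_of_disjoint_cut (cut_compl ends X ▸ hdisj)⟩
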